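/- arXiv:1508.02769 — 2 statements merged into one kernel-verified Lean document; each statement's English description precedes it below -/
import Mathlib

section
/- With h : ℂP^n → ℂ^{(n+1)²} defined by h([z])_{ij} = z_i z̄_j / Σ_l |z_l|², the image h(ℂP^n) is exactly the set S of matrices (w_{ij}) satisfying: w_{ij}w_{kl} = w_{il}w_{kj} for all i,j,k,l; Σ_i w_{ii} = 1; and w_{ij} = conjugate(w_{ji}) for all i,j. In particular, the image of ℂP^n is a real algebraic subset of ℝ^{2(n+1)²}. -/
open scoped ComplexConjugate

/-! A point `w` of `S` has a nonzero diagonal entry `w k k` because its trace is `1`. The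
rank-one relations together with `w k j = conj (w j k)` give `w i j = w i k * conj (w j k) / w k k`,
and, summing `w l k * conj (w l k) = w l l * w k k` over `l`, the squared length of the column
`w · k` is `w k k`; hence `w` is the image of the column `[w 0 k : ⋯ : w n k]`. -/

section LineProjection

variable {ι : Type*} [Fintype ι]

/-- The map `h` of the statement: `h([z])` is the matrix of the orthogonal projection onto `ℂ z`. -/
noncomputable def lineProjection (z : ι → ℂ) (i j : ι) : ℂ :=
  z i * conj (z j) / ((∑ l, Complex.normSq (z l) : ℝ) : ℂ)

theorem lineProjection_mul_mul (z : ι → ℂ) (i j k l : ι) :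
    lineProjection z i j * lineProjection z k l = lineProjection z i l * lineProjection z k j := by
  unfold lineProjection
  ring

theorem lineProjection_eq_conj (z : ι → ℂ) (i j : ι) :
    lineProjection z i j = conj (lineProjection z j i) := by
  simp only [lineProjection, map_div₀, map_mul, Complex.conj_conj, Complex.conj_ofReal]
  ring

theorem sum_normSq_pos {z : ι → ℂ} (hz : z ≠ 0) : 0 < ∑ l, Complex.normSq (z l) := by
  obtain ⟨l, hl⟩ := Function.ne_iff.mp hz
  exact Finset.sum_pos' (fun i _ => Complex.normSq_nonneg _)
    ⟨l, Finset.mem_univ l, Complex.normSq_pos.mpr hl⟩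

theorem trace_lineProjection {z : ι → ℂ} (hz : z ≠ 0) : ∑ i, lineProjection z i i = 1 := by
  have hN : ((∑ l, Complex.normSq (z l) : ℝ) : ℂ) ≠ 0 := mod_cast (sum_normSq_pos hz).ne'
  simp only [lineProjection]
  rw [← Finset.sum_div, div_eq_one_iff_eq hN]
  push_cast
  exact Finset.sum_congr rfl fun i _ => Complex.mul_conj (z i)

variable {w : ι → ι → ℂ}

theorem sum_normSq_column_eq_diag (hmul : ∀ i j k l, w i j * w k l = w i l * w k j)
    (htr : ∑ i, w i i = 1) (hherm : ∀ i j, w i j = conj (w j i)) (k : ι) :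
    ((∑ l, Complex.normSq (w l k) : ℝ) : ℂ) = w k k := by
  push_cast
  calc ∑ l, (Complex.normSq (w l k) : ℂ)
      = ∑ l, w l k * conj (w l k) :=
        Finset.sum_congr rfl fun l _ => (Complex.mul_conj (w l k)).symm
    _ = ∑ l, w l l * w k k :=
        Finset.sum_congr rfl fun l _ => by rw [← hherm k l, hmul]
    _ = w k k := by rw [← Finset.sum_mul, htr, one_mul]

theorem lineProjection_column (hmul : ∀ i j k l, w i j * w k l = w i l * w k j)
    (htr : ∑ i, w i i = 1) (hherm : ∀ i j, w i j = conj (w j i)) {k : ι} (hk : w k k ≠ 0) :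
    lineProjection (fun i => w i k) = w := by
  funext i j
  rw [lineProjection, sum_normSq_column_eq_diag hmul htr hherm, ← hherm k j, hmul i k k j,
    mul_div_cancel_right₀ _ hk]

end LineProjection

/-- The image of `h : ℂP^n → ℂ^{(n+1)²}`,
`h([z])_{ij} = z_i z̄_j / Σ_l |z_l|²`, is exactly the real algebraic set `S` of
matrices `(w_{ij})` with `w_{ij}w_{kl} = w_{il}w_{kj}`, `Σ_i w_{ii} = 1`, and
`w_{ij} = conj(w_{ji})`. -/
theorem stmt12 (n : ℕ) :
    {w : Fin (n + 1) → Fin (n + 1) → ℂ |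
        ∃ z : Fin (n + 1) → ℂ, z ≠ 0 ∧ ∀ i j : Fin (n + 1),
          w i j = z i * conj (z j) / ((∑ l, Complex.normSq (z l) : ℝ) : ℂ)}
      = {w : Fin (n + 1) → Fin (n + 1) → ℂ |
          (∀ i j k l : Fin (n + 1), w i j * w k l = w i l * w k j)
            ∧ (∑ i, w i i) = 1
            ∧ (∀ i j : Fin (n + 1), w i j = conj (w j i))} := by
  ext w
  constructor
  · rintro ⟨z, hz, hw⟩
    obtain rfl : w = lineProjection z := funext fun i => funext (hw i)
    exact ⟨lineProjection_mul_mul z, trace_lineProjection hz, lineProjection_eq_conj z⟩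
  · rintro ⟨hmul, htr, hherm⟩
    obtain ⟨k, -, hk⟩ := Finset.exists_ne_zero_of_sum_ne_zero (htr ▸ one_ne_zero)
    refine ⟨fun i => w i k, fun h => hk (congrFun h k), fun i j => ?_⟩
    exact (congrFun₂ (lineProjection_column hmul htr hherm hk) i j).symm
end

section
/- Let w = (w_{ij}) ∈ ℂ^{(n+1)×(n+1)} satisfy w_{ij}w_{kl} = w_{il}w_{kj} for all indices, Σ_i w_{ii} = 1, and w_{ij} = conjugate(w_{ji}). Then there exists k with w_{kk} ≠ 0, and for any such k, setting z_i = w_{ik}, one has z_i z̄_j / (Σ_l |z_l|²) = w_{ij} for all i,j. -/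
/-!
Combined with hermiticity, the rank-one relations give `w i k * conj (w j k) = w i j * w k k`.
For `i = j` summed over `i` this reads `∑ l, |w l k|² = w k k`, using the trace condition, and
dividing by it yields the claim.
-/

open scoped ComplexConjugate

section RankOneHermitian

variable {ι : Type*} {w : ι → ι → ℂ}

theorem mul_conj_eq_mul_diag (hrel : ∀ i j k l, w i j * w k l = w i l * w k j)
    (hherm : ∀ i j, w i j = conj (w j i)) (i j k : ι) :
    w i k * conj (w j k) = w i j * w k k := by
  rw [← hherm k j, hrel i k k j]

theorem sum_normSq_eq_diag [Fintype ι] (hrel : ∀ i j k l, w i j * w k l = w i l * w k j)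
    (htr : ∑ i, w i i = 1) (hherm : ∀ i j, w i j = conj (w j i)) (k : ι) :
    ((∑ l, Complex.normSq (w l k) : ℝ) : ℂ) = w k k := calc
  ((∑ l, Complex.normSq (w l k) : ℝ) : ℂ) = ∑ l, w l k * conj (w l k) := by
    push_cast
    simp only [Complex.mul_conj]
  _ = (∑ l, w l l) * w k k := by
    simp only [mul_conj_eq_mul_diag hrel hherm, Finset.sum_mul]
  _ = w k k := by rw [htr, one_mul]

end RankOneHermitian

/-- If `w ∈ ℂ^{(n+1)×(n+1)}` satisfies `w_{ij}w_{kl} = w_{il}w_{kj}`,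
`Σ_i w_{ii} = 1`, and `w_{ij} = conj(w_{ji})`, then some diagonal entry `w_{kk}` is
nonzero, and for any such `k`, the vector `z_i := w_{ik}` satisfies
`z_i z̄_j / Σ_l |z_l|² = w_{ij}` for all `i, j`. -/
theorem stmt13 (n : ℕ) (w : Fin (n + 1) → Fin (n + 1) → ℂ)
    (hrel : ∀ i j k l : Fin (n + 1), w i j * w k l = w i l * w k j)
    (htr : (∑ i, w i i) = 1)
    (hherm : ∀ i j : Fin (n + 1), w i j = conj (w j i)) :
    (∃ k, w k k ≠ 0) ∧
      ∀ k : Fin (n + 1), w k k ≠ 0 → ∀ i j : Fin (n + 1),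
        w i k * conj (w j k) / ((∑ l, Complex.normSq (w l k) : ℝ) : ℂ) = w i j := by
  refine ⟨?_, fun k hk i j => ?_⟩
  · obtain ⟨k, -, hk⟩ := Finset.exists_ne_zero_of_sum_ne_zero (htr ▸ one_ne_zero)
    exact ⟨k, hk⟩
  · rw [sum_normSq_eq_diag hrel htr hherm, mul_conj_eq_mul_diag hrel hherm,
      mul_div_cancel_right₀ _ hk]
end
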